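/- Basis from convergence: Let S = (B; R, E) be a linear rewriting system modulo and B' ⊆ BNF_S a subset of monomial S⁺-normal forms such that the image [B']_E is a basis of the module NF_S / ⟨E⟩_k of normal forms modulo E. If the positive rewriting system S⁺ is convergent modulo E (terminating and confluent), then the image [B']_S is a basis of the module ⟨B⟩_k / ⟨R ⊔ E⟩_k presented by S. -/

import Mathlib

variable {k : Type*} [CommRing k] {B : Type*}

/-- One generating step of the linear `E`-congruence on the free module
`B →₀ k`: a monomial-invertible relation `b → λ·b'` of `E`, applied linearly
inside a vector. -/
def EStepV (Erel : B → B → kˣ → Prop) (u v : B →₀ k) : Prop :=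
  ∃ (b b' : B) (lam : kˣ) (μ : k) (w : B →₀ k),
    Erel b b' lam ∧ u = w + μ • Finsupp.single b 1 ∧
      v = w + (μ * (lam : k)) • Finsupp.single b' 1

/-- The `E`-congruence `~_E` on the free module: the equivalence generated
linearly by the monomial-invertible relations of `E`. -/
def ECong (Erel : B → B → kˣ → Prop) : (B →₀ k) → (B →₀ k) → Prop :=
  Relation.EqvGen (EStepV Erel)

/-- Projective `E`-congruence of monomials: `b ~_E b'` up to an invertible
scalar. -/
def ProjE (Erel : B → B → kˣ → Prop) (b b' : B) : Prop :=
  ∃ lam : kˣ, ECong Erel (Finsupp.single b (1 : k)) ((lam : k) • Finsupp.single b' 1)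

/-- The `E`-projective support of a vector: all monomials projectively
`E`-congruent to a monomial of its ordinary support. -/
def SuppE (Erel : B → B → kˣ → Prop) (v : B →₀ k) : Set B :=
  {b | ∃ b' ∈ v.support, ProjE Erel b b'}

/-- An `S`-rewriting step of the linear rewriting system modulo `S = (R, E)`:
`u ~_E λ·s(r) + v → λ·t(r) + v ~_E w` for a relation `r : b → t` of `R` and
`λ ≠ 0`. -/
def SStepL (Rrel : B → (B →₀ k) → Prop) (Erel : B → B → kˣ → Prop)
    (u w : B →₀ k) : Prop :=
  ∃ (b : B) (t : B →₀ k) (lam : k) (v : B →₀ k),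
    lam ≠ 0 ∧ Rrel b t ∧
      ECong Erel u (lam • Finsupp.single b 1 + v) ∧
      ECong Erel (lam • t + v) w

/-- A positive `S`-rewriting step: moreover the rewritten monomial `s(r)` does
not occur, up to projective `E`-congruence, in the remainder `v`. -/
def PosStepL (Rrel : B → (B →₀ k) → Prop) (Erel : B → B → kˣ → Prop)
    (u w : B →₀ k) : Prop :=
  ∃ (b : B) (t : B →₀ k) (lam : k) (v : B →₀ k),
    lam ≠ 0 ∧ Rrel b t ∧ b ∉ SuppE Erel v ∧
      ECong Erel u (lam • Finsupp.single b 1 + v) ∧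
      ECong Erel (lam • t + v) w

/-- A positive `S`-rewriting sequence: an `E`-congruence (length zero) or a
nonempty composite of positive `S`-rewriting steps. -/
def PSeq (Rrel : B → (B →₀ k) → Prop) (Erel : B → B → kˣ → Prop)
    (u v : B →₀ k) : Prop :=
  ECong Erel u v ∨ Relation.TransGen (PosStepL Rrel Erel) u v

/-- A monomial `S⁺`-normal form: a monomial not `E`-projectively congruent to
the source of any relation of `R`. -/
def IsBNF (Rrel : B → (B →₀ k) → Prop) (Erel : B → B → kˣ → Prop) (b : B) : Prop :=
  ¬ ∃ (b' : B) (t : B →₀ k), Rrel b' t ∧ ProjE Erel b b'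

/-- The submodule `NF_S` of normal forms, spanned by the monomial
`S⁺`-normal forms. -/
noncomputable def NFmod (Rrel : B → (B →₀ k) → Prop) (Erel : B → B → kˣ → Prop) :
    Submodule k (B →₀ k) :=
  Submodule.span k {x | ∃ b : B, IsBNF Rrel Erel b ∧ x = Finsupp.single b (1 : k)}

/-- The submodule `⟨E⟩_k` generated by the differences of the relations of `E`. -/
noncomputable def NE (Erel : B → B → kˣ → Prop) : Submodule k (B →₀ k) :=
  Submodule.span k {x | ∃ (b b' : B) (lam : kˣ), Erel b b' lam ∧
    x = Finsupp.single b (1 : k) - (lam : k) • Finsupp.single b' 1}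

/-- The submodule `⟨R ⊔ E⟩_k` presented by `S`. -/
noncomputable def NSub (Rrel : B → (B →₀ k) → Prop) (Erel : B → B → kˣ → Prop) :
    Submodule k (B →₀ k) :=
  Submodule.span k
    ({x | ∃ b t, Rrel b t ∧ x = Finsupp.single b 1 - t} ∪
     {x | ∃ (b b' : B) (lam : kˣ), Erel b b' lam ∧
        x = Finsupp.single b (1 : k) - (lam : k) • Finsupp.single b' 1})


/-!
Write `N = NF_S`, `E = ⟨E⟩_k` and `S = ⟨R ⊔ E⟩_k`. Since `E ≤ S`, a basis of `N / E` maps to a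
basis of `⟨B⟩_k / S` as soon as `N ⊓ S ≤ E` and `N ⊔ S = ⊤`. Termination gives `N ⊔ S = ⊤`: every
vector rewrites to an `S⁺`-irreducible one, and an irreducible vector is `E`-congruent to a normal
form, because the `E`-class of a reducible monomial collapses to a multiple of the source of a rule.
Confluence gives `N ⊓ S ≤ E`: an element of `S` is joinable with `0` by positive rewriting, and a
vector of `N` admits no positive rewriting step, so it is `E`-congruent to `0`.
-/

open Finsupp Submodule

theorem Equivalence.rel_add_of_mem_span {R M : Type*} [Semiring R] [AddCommMonoid M]
    [Module R M] {r : M → M → Prop} (hr : Equivalence r) {s : Set M}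
    (hs : ∀ g ∈ s, ∀ (c : R) u, r u (u + c • g)) {d : M} (hd : d ∈ span R s) (u : M) :
    r u (u + d) := by
  suffices ∀ (c : R) u, r u (u + c • d) by simpa using this 1 u
  induction hd using Submodule.span_induction with
  | mem g hg => exact hs g hg
  | zero => intro c u; simpa using hr.refl u
  | add x y _ _ hx hy =>
    intro c u
    simpa [smul_add, add_assoc] using hr.trans (hx c u) (hy c (u + c • x))
  | smul a x _ hx => intro c u; simpa [smul_smul] using hx (c * a) u

section QuotientTransfer

variable {R M ι : Type*} [Ring R] [AddCommGroup M] [Module R M] {E S N : Submodule R M}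
  {v : ι → M}

theorem LinearIndependent.mkQ_of_le (hES : E ≤ S) (hinf : N ⊓ S ≤ E)
    (hind : LinearIndependent R fun i => E.mkQ (v i))
    (hspan : span R (Set.range fun i => E.mkQ (v i)) = N.map E.mkQ) :
    LinearIndependent R fun i => S.mkQ (v i) := by
  refine hind.map (f := factor hES) ?_
  rw [hspan, disjoint_iff_inf_le]
  rintro _ ⟨⟨x, hxN, rfl⟩, hx⟩
  rw [SetLike.mem_coe, LinearMap.mem_ker, factor_mk, mkQ_apply, Quotient.mk_eq_zero] at hx
  rw [mem_bot, mkQ_apply, Quotient.mk_eq_zero]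
  exact hinf ⟨hxN, hx⟩

theorem span_range_mkQ_eq_top_of_le (hES : E ≤ S) (hsup : N ⊔ S = ⊤)
    (hspan : span R (Set.range fun i => E.mkQ (v i)) = N.map E.mkQ) :
    span R (Set.range fun i => S.mkQ (v i)) = ⊤ := by
  have hcomp : (fun i => S.mkQ (v i)) = factor hES ∘ fun i => E.mkQ (v i) := rfl
  rw [hcomp, Set.range_comp, span_image, hspan, ← map_comp, factor_comp_mk, map_mkQ_eq_top,
    sup_comm, hsup]

end QuotientTransfer

section ECongruence

variable {Erel : B → B → kˣ → Prop} {u v : B →₀ k} {a b c : B}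

open Classical

theorem single_sub_smul_single_mem_nE {b b' : B} {lam : kˣ} (hE : Erel b b' lam) :
    single b (1 : k) - (lam : k) • single b' 1 ∈ NE Erel :=
  subset_span ⟨b, b', lam, hE, rfl⟩

theorem EStepV.sModEq (h : EStepV Erel u v) : u ≡ v [SMOD NE Erel] := by
  obtain ⟨b, b', lam, μ, w, hE, rfl, rfl⟩ := h
  rw [SModEq.sub_mem]
  convert smul_mem _ μ (single_sub_smul_single_mem_nE hE) using 1
  module

theorem eCong_iff_sModEq : ECong Erel u v ↔ u ≡ v [SMOD NE Erel] := by
  refine ⟨fun h => ?_, fun h => ?_⟩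
  · induction h with
    | rel _ _ h => exact h.sModEq
    | refl => exact SModEq.rfl
    | symm _ _ _ ih => exact ih.symm
    | trans _ _ _ _ _ ih₁ ih₂ => exact ih₁.trans ih₂
  · refine add_sub_cancel u v ▸ (Relation.EqvGen.is_equivalence _).rel_add_of_mem_span ?_
      (SModEq.sub_mem.1 h.symm) u
    rintro _ ⟨b, b', lam, hE, rfl⟩ c u
    exact .symm _ _ <| .rel _ _
      ⟨b, b', lam, c, u - (c * lam) • single b' 1, hE, by module, by module⟩

theorem projE_iff :
    ProjE Erel a b ↔ ∃ lam : kˣ, single a (1 : k) ≡ (lam : k) • single b 1 [SMOD NE Erel] := by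
  simp only [ProjE, eCong_iff_sModEq]

theorem projE_refl (a : B) : ProjE Erel a a :=
  projE_iff.2 ⟨1, by rw [Units.val_one, one_smul]⟩

theorem ProjE.symm (h : ProjE Erel a b) : ProjE Erel b a := by
  obtain ⟨lam, h⟩ := projE_iff.1 h
  refine projE_iff.2 ⟨lam⁻¹, ?_⟩
  simpa [smul_smul] using (h.smul ((lam⁻¹ : kˣ) : k)).symm

theorem ProjE.trans (h₁ : ProjE Erel a b) (h₂ : ProjE Erel b c) : ProjE Erel a c := by
  obtain ⟨lam, h₁⟩ := projE_iff.1 h₁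
  obtain ⟨μ, h₂⟩ := projE_iff.1 h₂
  exact projE_iff.2 ⟨lam * μ, by simpa [smul_smul] using h₁.trans (h₂.smul (lam : k))⟩

theorem suppE_smul_subset (c : k) (v : B →₀ k) : SuppE Erel (c • v) ⊆ SuppE Erel v :=
  fun _ ⟨a, ha, hp⟩ => ⟨a, support_smul ha, hp⟩

theorem suppE_add_subset (u v : B →₀ k) : SuppE Erel (u + v) ⊆ SuppE Erel u ∪ SuppE Erel v := by
  rintro _ ⟨a, ha, hp⟩
  rcases Finset.mem_union.1 (support_add ha) with ha | ha
  exacts [Or.inl ⟨a, ha, hp⟩, Or.inr ⟨a, ha, hp⟩]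

theorem sModEq_filter_projE (b : B) (h : u ≡ v [SMOD NE Erel]) :
    u.filter (ProjE Erel · b) ≡ v.filter (ProjE Erel · b) [SMOD NE Erel] := by
  let π : (B →₀ k) →ₗ[k] B →₀ k :=
    { toFun := (·.filter (ProjE Erel · b)), map_add' := fun _ _ => filter_add
      map_smul' := fun _ _ => filter_smul }
  suffices NE Erel ≤ (NE Erel).comap π by
    simpa [π, SModEq.sub_mem, filter_sub] using this (SModEq.sub_mem.1 h)
  refine span_le.2 ?_
  rintro _ ⟨a, a', lam, hE, rfl⟩
  have haa' : ProjE Erel a a' :=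
    projE_iff.2 ⟨lam, SModEq.sub_mem.2 (single_sub_smul_single_mem_nE hE)⟩
  simp only [SetLike.mem_coe, mem_comap, π, LinearMap.coe_mk, AddHom.coe_mk, filter_sub,
    filter_smul]
  by_cases ha : ProjE Erel a b
  · rw [filter_single_of_pos (ProjE Erel · b) ha,
      filter_single_of_pos (ProjE Erel · b) (haa'.symm.trans ha)]
    exact single_sub_smul_single_mem_nE hE
  · rw [filter_single_of_neg (ProjE Erel · b) ha,
      filter_single_of_neg (ProjE Erel · b) fun h => ha (haa'.trans h), smul_zero, sub_zero]
    exact zero_mem _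

theorem exists_filter_projE_sModEq_smul_single (b : B) (v : B →₀ k) :
    ∃ σ : k, v.filter (ProjE Erel · b) ≡ σ • single b 1 [SMOD NE Erel] := by
  have hmem : v.filter (ProjE Erel · b) ∈ supported k k {a | ProjE Erel a b} := by
    intro a ha
    exact (Finset.mem_filter.1 ha).2
  rw [supported_eq_span_single] at hmem
  have hspan : (NE Erel).mkQ (v.filter (ProjE Erel · b)) ∈ k ∙ (NE Erel).mkQ (single b 1) := by
    refine (map_span_le _ _ _).2 ?_ (mem_map_of_mem hmem)
    rintro _ ⟨a, ha, rfl⟩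
    obtain ⟨lam, hlam⟩ := projE_iff.1 ha
    exact mem_span_singleton.2 ⟨lam, by rw [← map_smul]; exact hlam.symm⟩
  obtain ⟨σ, hσ⟩ := mem_span_singleton.1 hspan
  exact ⟨σ, by rw [SModEq.def, ← mkQ_apply, ← mkQ_apply, ← hσ, map_smul]⟩

theorem exists_sModEq_smul_single_add_filter (b : B) (v : B →₀ k) :
    ∃ σ : k, v ≡ σ • single b 1 + v.filter (¬ ProjE Erel · b) [SMOD NE Erel] := by
  obtain ⟨σ, hσ⟩ := exists_filter_projE_sModEq_smul_single b v
  refine ⟨σ, ?_⟩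
  conv_lhs => rw [← filter_add_filter_not v (ProjE Erel · b)]
  exact hσ.add SModEq.rfl

theorem notMem_suppE_filter (b : B) (v : B →₀ k) :
    b ∉ SuppE Erel (v.filter (¬ ProjE Erel · b)) :=
  fun ⟨_, ha, hba⟩ => (Finset.mem_filter.1 ha).2 hba.symm

end ECongruence

section PositiveRewriting

variable {Rrel : B → (B →₀ k) → Prop} {Erel : B → B → kˣ → Prop} {u v w x : B →₀ k}
  {b : B} {t : B →₀ k}

theorem nE_le_nSub : NE Erel ≤ NSub Rrel Erel := span_mono Set.subset_union_right

theorem PosStepL.eCong_left (h : ECong Erel x u) (hs : PosStepL Rrel Erel u w) :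
    PosStepL Rrel Erel x w :=
  let ⟨b, t, c, v, hc, hR, hb, h₁, h₂⟩ := hs
  ⟨b, t, c, v, hc, hR, hb, .trans _ _ _ h h₁, h₂⟩

theorem PosStepL.eCong_right (hs : PosStepL Rrel Erel u w) (h : ECong Erel w x) :
    PosStepL Rrel Erel u x :=
  let ⟨b, t, c, v, hc, hR, hb, h₁, h₂⟩ := hs
  ⟨b, t, c, v, hc, hR, hb, h₁, .trans _ _ _ h₂ h⟩

theorem PosStepL.sModEq_nSub (hs : PosStepL Rrel Erel u w) : u ≡ w [SMOD NSub Rrel Erel] := by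
  obtain ⟨b, t, c, v, -, hR, -, h₁, h₂⟩ := hs
  have hbt : single b 1 ≡ t [SMOD NSub Rrel Erel] :=
    SModEq.sub_mem.2 (subset_span (Or.inl ⟨b, t, hR, rfl⟩))
  exact ((eCong_iff_sModEq.1 h₁).mono nE_le_nSub).trans
    (((hbt.smul c).add SModEq.rfl).trans ((eCong_iff_sModEq.1 h₂).mono nE_le_nSub))

theorem PSeq.of_eCong (h : ECong Erel u v) : PSeq Rrel Erel u v := Or.inl h

theorem PSeq.refl (u : B →₀ k) : PSeq Rrel Erel u u := .of_eCong (.refl u)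

theorem PSeq.trans (h₁ : PSeq Rrel Erel u v) (h₂ : PSeq Rrel Erel v w) : PSeq Rrel Erel u w := by
  rcases h₁ with h₁ | h₁ <;> rcases h₂ with h₂ | h₂
  · exact .of_eCong (.trans _ _ _ h₁ h₂)
  · obtain ⟨y, hy, hyw⟩ := Relation.TransGen.head'_iff.1 h₂
    exact Or.inr (.head' (hy.eCong_left h₁) hyw)
  · obtain ⟨y, huy, hy⟩ := Relation.TransGen.tail'_iff.1 h₁
    exact Or.inr (.tail' huy (hy.eCong_right h₂))
  · exact Or.inr (h₁.trans h₂)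

instance : IsPreorder (B →₀ k) (PSeq Rrel Erel) where
  refl := PSeq.refl
  trans _ _ _ := PSeq.trans

theorem PSeq.sModEq_nSub (h : PSeq Rrel Erel u v) : u ≡ v [SMOD NSub Rrel Erel] := by
  rcases h with h | h
  · exact (eCong_iff_sModEq.1 h).mono nE_le_nSub
  · induction h with
    | single hs => exact hs.sModEq_nSub
    | tail _ hs ih => exact ih.trans hs.sModEq_nSub

theorem pSeq_smul_single_add (hR : Rrel b t) (hb : b ∉ SuppE Erel v) (c : k) :
    PSeq Rrel Erel (c • single b 1 + v) (c • t + v) := by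
  by_cases hc : c = 0
  · simpa [hc] using PSeq.refl v
  · exact Or.inr (.single ⟨b, t, c, v, hc, hR, hb, .refl _, .refl _⟩)

def IsPosNF (Rrel : B → (B →₀ k) → Prop) (Erel : B → B → kˣ → Prop) (v : B →₀ k) : Prop :=
  ∀ w, ¬ PosStepL Rrel Erel v w

theorem IsPosNF.of_eCong (h : ECong Erel u v) (hv : IsPosNF Rrel Erel v) : IsPosNF Rrel Erel u :=
  fun w hs => hv w (hs.eCong_left (.symm _ _ h))

theorem exists_pSeq_isPosNF
    (hterm : ¬ ∃ f : ℕ → (B →₀ k), ∀ n, PosStepL Rrel Erel (f n) (f (n + 1))) (u : B →₀ k) :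
    ∃ v, PSeq Rrel Erel u v ∧ IsPosNF Rrel Erel v := by
  have hwf : WellFounded (flip (PosStepL Rrel Erel)) :=
    wellFounded_iff_isEmpty_descending_chain.2 ⟨fun ⟨f, hf⟩ => hterm ⟨f, hf⟩⟩
  induction u using hwf.induction with | _ u ih => ?_
  by_cases h : IsPosNF Rrel Erel u
  · exact ⟨u, .refl u, h⟩
  · obtain ⟨w, hw⟩ := not_forall_not.1 h
    obtain ⟨v, hwv, hv⟩ := ih w hw
    exact ⟨v, PSeq.trans (Or.inr (.single hw)) hwv, hv⟩

theorem nFmod_eq_supported : NFmod Rrel Erel = supported k k {a | IsBNF Rrel Erel a} := by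
  rw [supported_eq_span_single, NFmod]
  congr 1
  ext x
  simp [eq_comm]

open Classical in
theorem filter_projE_eq_zero_of_mem_nFmod (hu : u ∈ NFmod Rrel Erel) (hR : Rrel b t) :
    u.filter (ProjE Erel · b) = 0 := by
  rw [nFmod_eq_supported, mem_supported'] at hu
  exact (filter_eq_zero_iff _ _).2 fun a hab => hu a fun ha => ha ⟨b, t, hR, hab⟩

theorem smul_single_notMem_nE (hadapted : ∀ b t, Rrel b t → b ∉ SuppE Erel t)
    (hterm : ¬ ∃ f : ℕ → (B →₀ k), ∀ n, PosStepL Rrel Erel (f n) (f (n + 1)))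
    (hR : Rrel b t) {c : k} (hc : c ≠ 0) : c • single b 1 ∉ NE Erel := by
  intro hmem
  -- Then `n • c • t ~_E c • s(r) + n • c • t → (n + 1) • c • t` is an infinite positive chain.
  refine hterm ⟨fun n => (n : k) • c • t, fun n => ⟨b, t, c, (n : k) • c • t, hc, hR, ?_, ?_, ?_⟩⟩
  · exact fun hb => hadapted b t hR (suppE_smul_subset _ _ (suppE_smul_subset _ _ hb))
  · exact eCong_iff_sModEq.2 (SModEq.sub_mem.2 (by simpa using neg_mem hmem))
  · show ECong Erel _ (((n + 1 : ℕ) : k) • c • t)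
    rw [show ((n + 1 : ℕ) : k) • c • t = c • t + (n : k) • c • t by push_cast; module]
    exact .refl _

theorem isPosNF_of_mem_nFmod (hadapted : ∀ b t, Rrel b t → b ∉ SuppE Erel t)
    (hterm : ¬ ∃ f : ℕ → (B →₀ k), ∀ n, PosStepL Rrel Erel (f n) (f (n + 1)))
    (hu : u ∈ NFmod Rrel Erel) : IsPosNF Rrel Erel u := by
  classical
  rintro w ⟨b, t, c, v, hc, hR, hb, hu', -⟩
  have h := sModEq_filter_projE b (eCong_iff_sModEq.1 hu')
  have hv : v.filter (ProjE Erel · b) = 0 :=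
    (filter_eq_zero_iff _ _).2 fun a hab => notMem_support_iff.1 fun ha => hb ⟨a, ha, hab.symm⟩
  rw [filter_add, filter_smul, filter_single_of_pos (ProjE Erel · b) (projE_refl b), hv, add_zero,
    filter_projE_eq_zero_of_mem_nFmod hu hR] at h
  exact smul_single_notMem_nE hadapted hterm hR hc (by simpa using SModEq.zero.1 h.symm)

theorem PSeq.eCong_of_isPosNF (h : PSeq Rrel Erel u v) (hu : IsPosNF Rrel Erel u) :
    ECong Erel u v := by
  rcases h with h | h
  · exact h
  · obtain ⟨w, huw, -⟩ := Relation.TransGen.head'_iff.1 h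
    exact absurd huw (hu w)

theorem IsPosNF.exists_mem_nFmod_sModEq (hv : IsPosNF Rrel Erel v) :
    ∃ u ∈ NFmod Rrel Erel, v ≡ u [SMOD NE Erel] := by
  classical
  induction hn : v.support.card using Nat.strong_induction_on generalizing v with
  | _ n ih =>
    by_cases hbnf : ∀ a ∈ v.support, IsBNF Rrel Erel a
    · exact ⟨v, by rw [nFmod_eq_supported]; exact hbnf, SModEq.rfl⟩
    obtain ⟨a, ha, hna⟩ := not_forall₂.1 hbnf
    obtain ⟨b, t, hR, hab⟩ := not_not.1 hna
    obtain ⟨σ, hσ⟩ := exists_sModEq_smul_single_add_filter (Erel := Erel) b v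
    have hσ0 : σ = 0 := by
      by_contra hσ0
      exact hv _ ⟨b, t, σ, _, hσ0, hR, notMem_suppE_filter b v, eCong_iff_sModEq.2 hσ, .refl _⟩
    rw [hσ0, zero_smul, zero_add] at hσ
    have hcard : (v.filter (¬ ProjE Erel · b)).support.card < n :=
      hn ▸ Finset.card_lt_card (Finset.filter_ssubset.2 ⟨a, ha, not_not.2 hab⟩)
    obtain ⟨u, hu, hvu⟩ := ih _ hcard (hv.of_eCong (.symm _ _ (eCong_iff_sModEq.2 hσ))) rfl
    exact ⟨u, hu, hσ.trans hvu⟩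

-- Split `v ~_E σ • s(r) + v'` with `s(r) ∉ SuppE v'`: both sides rewrite to `(c + σ) • t + v'`.
theorem join_smul_single_add (hadapted : ∀ b t, Rrel b t → b ∉ SuppE Erel t)
    (hR : Rrel b t) (c : k) (v : B →₀ k) :
    Relation.Join (PSeq Rrel Erel) (c • single b 1 + v) (c • t + v) := by
  classical
  obtain ⟨σ, hσ⟩ := exists_sModEq_smul_single_add_filter (Erel := Erel) b v
  set v' := v.filter (¬ ProjE Erel · b)
  have hb : b ∉ SuppE Erel v' := notMem_suppE_filter b v
  have hbt : b ∉ SuppE Erel (c • t + v') := fun h =>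
    (suppE_add_subset _ _ h).elim (fun h => hadapted b t hR (suppE_smul_subset _ _ h)) hb
  refine ⟨(c + σ) • t + v', (PSeq.of_eCong (eCong_iff_sModEq.2 ?_)).trans
    (pSeq_smul_single_add hR hb _), (PSeq.of_eCong (eCong_iff_sModEq.2 ?_)).trans
    ((pSeq_smul_single_add hR hbt σ).trans (.of_eCong (eCong_iff_sModEq.2 ?_)))⟩
  · convert (SModEq.refl (c • single b 1)).add hσ using 1
    module
  · convert (SModEq.refl (c • t)).add hσ using 1
    module
  · rw [show σ • t + (c • t + v') = (c + σ) • t + v' by module]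

theorem join_of_sModEq_nSub (hadapted : ∀ b t, Rrel b t → b ∉ SuppE Erel t)
    (hconf : ∀ u v v' : B →₀ k, PSeq Rrel Erel u v → PSeq Rrel Erel u v' →
      ∃ w, PSeq Rrel Erel v w ∧ PSeq Rrel Erel v' w)
    (h : u ≡ v [SMOD NSub Rrel Erel]) : Relation.Join (PSeq Rrel Erel) u v := by
  have hJ := Relation.equivalence_join hconf
  refine add_sub_cancel u v ▸ hJ.rel_add_of_mem_span ?_ (SModEq.sub_mem.1 h.symm) u
  rintro _ (⟨b, t, hR, rfl⟩ | ⟨b, b', lam, hE, rfl⟩) c u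
  · convert hJ.symm (join_smul_single_add hadapted hR c (u - c • t)) using 1 <;> module
  · refine ⟨_, .of_eCong (eCong_iff_sModEq.2 (SModEq.sub_mem.2 ?_)), .refl _⟩
    simpa using neg_mem (smul_mem _ c (single_sub_smul_single_mem_nE hE))

theorem nFmod_inf_nSub_le_nE (hadapted : ∀ b t, Rrel b t → b ∉ SuppE Erel t)
    (hterm : ¬ ∃ f : ℕ → (B →₀ k), ∀ n, PosStepL Rrel Erel (f n) (f (n + 1)))
    (hconf : ∀ u v v' : B →₀ k, PSeq Rrel Erel u v → PSeq Rrel Erel u v' →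
      ∃ w, PSeq Rrel Erel v w ∧ PSeq Rrel Erel v' w) :
    NFmod Rrel Erel ⊓ NSub Rrel Erel ≤ NE Erel := by
  rintro x ⟨hxN, hxS⟩
  obtain ⟨w, hxw, h0w⟩ := join_of_sModEq_nSub hadapted hconf (SModEq.zero.2 hxS)
  have hx := hxw.eCong_of_isPosNF (isPosNF_of_mem_nFmod hadapted hterm hxN)
  have h0 := h0w.eCong_of_isPosNF (isPosNF_of_mem_nFmod hadapted hterm (zero_mem _))
  exact SModEq.zero.1 ((eCong_iff_sModEq.1 hx).trans (eCong_iff_sModEq.1 h0).symm)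

theorem nFmod_sup_nSub_eq_top
    (hterm : ¬ ∃ f : ℕ → (B →₀ k), ∀ n, PosStepL Rrel Erel (f n) (f (n + 1))) :
    NFmod Rrel Erel ⊔ NSub Rrel Erel = ⊤ := by
  refine eq_top_iff.2 fun u _ => ?_
  obtain ⟨v, huv, hv⟩ := exists_pSeq_isPosNF hterm u
  obtain ⟨w, hw, hvw⟩ := hv.exists_mem_nFmod_sModEq
  have huw : u - w ∈ NSub Rrel Erel :=
    SModEq.sub_mem.1 (huv.sModEq_nSub.trans (hvw.mono nE_le_nSub))
  exact mem_sup.2 ⟨w, hw, u - w, huw, add_sub_cancel _ _⟩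

end PositiveRewriting

theorem stmt10_general {k : Type*} [CommRing k] {B : Type*}
    (Rrel : B → (B →₀ k) → Prop) (Erel : B → B → kˣ → Prop)
    (hadapted : ∀ b t, Rrel b t → b ∉ SuppE Erel t)
    (B' : Set B)
    -- `[B']_E` is a basis of `NF_S / ⟨E⟩_k`:
    (hindE : LinearIndependent k
      (fun b : B' => (NE Erel).mkQ (Finsupp.single (b : B) (1 : k))))
    (hspanE : Submodule.span k
        (Set.range fun b : B' => (NE Erel).mkQ (Finsupp.single (b : B) (1 : k))) =
      Submodule.map (NE Erel).mkQ (NFmod Rrel Erel))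
    -- `S⁺` is terminating modulo `E`:
    (hterm : ¬ ∃ f : ℕ → (B →₀ k), ∀ n, PosStepL Rrel Erel (f n) (f (n + 1)))
    -- and confluent:
    (hconf : ∀ u v v' : B →₀ k, PSeq Rrel Erel u v → PSeq Rrel Erel u v' →
      ∃ w, PSeq Rrel Erel v w ∧ PSeq Rrel Erel v' w) :
    LinearIndependent k
      (fun b : B' => (NSub Rrel Erel).mkQ (Finsupp.single (b : B) (1 : k))) ∧
    Submodule.span k
      (Set.range fun b : B' =>
        (NSub Rrel Erel).mkQ (Finsupp.single (b : B) (1 : k))) = ⊤ :=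
  ⟨hindE.mkQ_of_le nE_le_nSub (nFmod_inf_nSub_le_nE hadapted hterm hconf) hspanE,
    span_range_mkQ_eq_top_of_le nE_le_nSub (nFmod_sup_nSub_eq_top hterm) hspanE⟩

/-- **Basis from convergence.**
Let `S = (B; R, E)` be a linear rewriting system modulo (`R` left-monomial and
`E`-adapted, `E` monomial-invertible), and let `B' ⊆ BNF_S` be a set of
monomial `S⁺`-normal forms whose image `[B']_E` is a basis of the module
`NF_S / ⟨E⟩_k` of normal forms modulo `E`.  If the positive rewriting system
`S⁺` is convergent modulo `E` (terminating and confluent), then the image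
`[B']_S` is a basis of the module `⟨B⟩_k / ⟨R ⊔ E⟩_k` presented by `S`. -/
theorem stmt10 {k : Type*} [CommRing k] {B : Type*}
    (Rrel : B → (B →₀ k) → Prop) (Erel : B → B → kˣ → Prop)
    (hadapted : ∀ b t, Rrel b t → b ∉ SuppE Erel t)
    (B' : Set B) (hB' : ∀ b ∈ B', IsBNF Rrel Erel b)
    -- `[B']_E` is a basis of `NF_S / ⟨E⟩_k`:
    (hindE : LinearIndependent k
      (fun b : B' => (NE Erel).mkQ (Finsupp.single (b : B) (1 : k))))
    (hspanE : Submodule.span k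
        (Set.range fun b : B' => (NE Erel).mkQ (Finsupp.single (b : B) (1 : k))) =
      Submodule.map (NE Erel).mkQ (NFmod Rrel Erel))
    -- `S⁺` is terminating modulo `E`:
    (hterm : ¬ ∃ f : ℕ → (B →₀ k), ∀ n, PosStepL Rrel Erel (f n) (f (n + 1)))
    -- and confluent:
    (hconf : ∀ u v v' : B →₀ k, PSeq Rrel Erel u v → PSeq Rrel Erel u v' →
      ∃ w, PSeq Rrel Erel v w ∧ PSeq Rrel Erel v' w) :
    LinearIndependent k
      (fun b : B' => (NSub Rrel Erel).mkQ (Finsupp.single (b : B) (1 : k))) ∧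
    Submodule.span k
      (Set.range fun b : B' =>
        (NSub Rrel Erel).mkQ (Finsupp.single (b : B) (1 : k))) = ⊤ :=
  stmt10_general Rrel Erel hadapted B' hindE hspanE hterm hconf
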